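/- arXiv:2603.16074 — 2 statements merged into one kernel-verified Lean document; each statement's English description precedes it below -/
import Mathlib

section
/- Let E be the Euclidean space ℝ² (e.g., EuclideanSpace ℝ (Fin 2) or ℝ × ℝ with the standard inner product), and more generally any finite-dimensional real inner product space. Let f : ℝ → E → E be continuous, let x : ℝ → E satisfy HasDerivAt x (f t (x t)) t for every t, let h : ℝ × E → ℝ and W : ℝ × E → ℝ be continuously differentiable, and define the auxiliary derivative Ẇ(t,y) as the Fréchet derivative of W at (t,y) applied to the direction (1, f t y). Let K ⊆ E, and for ρ > 0 define the boundary layer Σρ(t) = {y ∈ E : 0 ≤ h(t,y) ≤ ρ}. Suppose there exist constants M > 0 and η > 0 such that |W(t,y)| ≤ M for all t ≥ 0 and all y ∈ K, and |Ẇ(t,y)| ≥ η for all t ≥ 0 and all y ∈ K ∩ Σρ(t). If there exist t₀ ≥ 0 and T ≥ 0 such that x(t) ∈ K ∩ Σρ(t) for all t ∈ [t₀, t₀ + T], then T ≤ 2M/η. -/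
/-- Residence-time bound of Theorem 2 (Exclusion of Persistent Boundary Residence):
if a trajectory of `ẋ = f(t,x)` remains in `K ∩ Σ_ρ(t)` on `[t₀, t₀ + T]`, where the
auxiliary function `W` is bounded by `M` on `K` and its derivative along the vector
field has absolute value at least `η` on `K ∩ Σ_ρ(t)`, then `T ≤ 2M/η`. -/
theorem residence_time_bound
    {E : Type*} [NormedAddCommGroup E] [InnerProductSpace ℝ E] [FiniteDimensional ℝ E]
    (f : ℝ → E → E) (hf : Continuous fun p : ℝ × E => f p.1 p.2)
    (x : ℝ → E) (hx : ∀ t : ℝ, HasDerivAt x (f t (x t)) t)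
    (h W : ℝ × E → ℝ) (hh : ContDiff ℝ 1 h) (hW : ContDiff ℝ 1 W)
    (K : Set E) (ρ : ℝ) (hρ : 0 < ρ)
    (M η : ℝ) (hM : 0 < M) (hη : 0 < η)
    (hWbd : ∀ t : ℝ, 0 ≤ t → ∀ y ∈ K, |W (t, y)| ≤ M)
    (hWder : ∀ t : ℝ, 0 ≤ t → ∀ y ∈ K,
      0 ≤ h (t, y) → h (t, y) ≤ ρ → η ≤ |fderiv ℝ W (t, y) (1, f t y)|)
    (t₀ T : ℝ) (ht₀ : 0 ≤ t₀) (hT : 0 ≤ T)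
    (hres : ∀ t ∈ Set.Icc t₀ (t₀ + T),
      x t ∈ K ∧ 0 ≤ h (t, x t) ∧ h (t, x t) ≤ ρ) :
    T ≤ 2 * M / η := by
  set φ : ℝ → ℝ := fun t => fderiv ℝ W (t, x t) (1, f t (x t)) with hφdef
  set g : ℝ → ℝ := fun t => W (t, x t) with hgdef
  have hxcont : Continuous x := continuous_iff_continuousAt.mpr fun t => (hx t).continuousAt
  have hcurve : Continuous fun t : ℝ => (t, x t) := continuous_id.prodMk hxcont
  have hg : ∀ t : ℝ, HasDerivAt g (φ t) t := by
    intro t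
    have hc : HasDerivAt (fun t : ℝ => (t, x t)) (1, f t (x t)) t :=
      (hasDerivAt_id t).prodMk (hx t)
    exact ((hW.differentiable one_ne_zero (t, x t)).hasFDerivAt).comp_hasDerivAt t hc
  have hφcont : Continuous φ := by
    have h1 : Continuous fun t : ℝ => fderiv ℝ W (t, x t) :=
      (hW.continuous_fderiv one_ne_zero).comp hcurve
    have h2 : Continuous fun t : ℝ => ((1 : ℝ), f t (x t)) :=
      continuous_const.prodMk (hf.comp hcurve)
    exact h1.clm_apply h2
  -- bound on |φ| on the interval
  have hφbd : ∀ t ∈ Set.Icc t₀ (t₀ + T), η ≤ |φ t| := by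
    intro t ht
    obtain ⟨hK, h0, hρ'⟩ := hres t ht
    exact hWder t (le_trans ht₀ ht.1) (x t) hK h0 hρ'
  have ht0mem : t₀ ∈ Set.Icc t₀ (t₀ + T) := ⟨le_refl _, by linarith⟩
  have ht1mem : t₀ + T ∈ Set.Icc t₀ (t₀ + T) := ⟨by linarith, le_refl _⟩
  -- g bounded by M on interval
  have hgbd : ∀ t ∈ Set.Icc t₀ (t₀ + T), |g t| ≤ M := fun t ht =>
    hWbd t (le_trans ht₀ ht.1) (x t) (hres t ht).1
  -- sign constancy of φ
  have hsign : (∀ t ∈ Set.Icc t₀ (t₀ + T), η ≤ φ t) ∨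
      (∀ t ∈ Set.Icc t₀ (t₀ + T), φ t ≤ -η) := by
    have key : ∀ t ∈ Set.Icc t₀ (t₀ + T), φ t ≠ 0 := by
      intro t ht h0
      have := hφbd t ht
      rw [h0, abs_zero] at this; linarith
    rcases le_or_gt η (φ t₀) with hpos | hneg
    · left
      intro t ht
      by_contra hc
      push_neg at hc
      have hneg : φ t ≤ -η := by
        have := hφbd t ht
        rcases abs_cases (φ t) with ⟨he, _⟩ | ⟨he, _⟩
        · linarith [he ▸ this]
        · linarith [he ▸ this]
      -- IVT: φ continuous on [t₀,t], φ t₀ ≥ η > 0 > -η ≥ φ t, so some zero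
      have hsub : Set.Icc t₀ t ⊆ Set.Icc t₀ (t₀ + T) :=
        Set.Icc_subset_Icc le_rfl ht.2
      have : (0 : ℝ) ∈ Set.Icc (φ t) (φ t₀) := ⟨by linarith, by linarith⟩
      obtain ⟨s, hs, hs0⟩ := intermediate_value_Icc' ht.1
        (hφcont.continuousOn (s := Set.Icc t₀ t)) this
      exact key s (hsub hs) hs0
    · right
      have hneg' : φ t₀ ≤ -η := by
        have := hφbd t₀ ht0mem
        rcases abs_cases (φ t₀) with ⟨he, _⟩ | ⟨he, _⟩
        · linarith [he ▸ this]
        · linarith [he ▸ this]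
      intro t ht
      by_contra hc
      push_neg at hc
      have hpos' : η ≤ φ t := by
        have := hφbd t ht
        rcases abs_cases (φ t) with ⟨he, _⟩ | ⟨he, _⟩
        · linarith [he ▸ this]
        · linarith [he ▸ this]
      have hsub : Set.Icc t₀ t ⊆ Set.Icc t₀ (t₀ + T) :=
        Set.Icc_subset_Icc le_rfl ht.2
      have : (0 : ℝ) ∈ Set.Icc (φ t₀) (φ t) := ⟨by linarith, by linarith⟩
      obtain ⟨s, hs, hs0⟩ := intermediate_value_Icc ht.1
        (hφcont.continuousOn (s := Set.Icc t₀ t)) this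
      exact (by
        intro h0
        have := hφbd s (hsub hs)
        rw [h0, abs_zero] at this; linarith : φ s ≠ 0) hs0
  -- in either case, |g(t₀+T) - g t₀| ≥ η T
  have hkey : η * T ≤ 2 * M := by
    rcases hsign with hpos | hneg
    · -- u t = g t - η t is monotone on the interval
      have hmono : MonotoneOn (fun t => g t - η * t) (Set.Icc t₀ (t₀ + T)) := by
        apply monotoneOn_of_deriv_nonneg (convex_Icc _ _)
        · exact ((continuous_iff_continuousAt.mpr fun t => (hg t).continuousAt).sub (continuous_const.mul continuous_id)).continuousOn
        · intro t _
          exact ((hg t).sub ((hasDerivAt_id t).const_mul η)).differentiableAt.differentiableWithinAt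
        · intro t ht
          rw [interior_Icc] at ht
          have hd : HasDerivAt (fun t => g t - η * t) (φ t - η * 1) t :=
            (hg t).sub ((hasDerivAt_id t).const_mul η)
          rw [hd.deriv]
          have := hpos t ⟨le_of_lt ht.1, le_of_lt ht.2⟩
          linarith
      have := hmono ht0mem ht1mem (by linarith)
      have h1 := hgbd t₀ ht0mem
      have h2 := hgbd (t₀ + T) ht1mem
      rw [abs_le] at h1 h2
      simp only at this
      nlinarith [h1.1, h2.2]
    · have hmono : MonotoneOn (fun t => -(g t) - η * t) (Set.Icc t₀ (t₀ + T)) := by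
        apply monotoneOn_of_deriv_nonneg (convex_Icc _ _)
        · exact (((continuous_iff_continuousAt.mpr fun t => (hg t).continuousAt).neg).sub
            (continuous_const.mul continuous_id)).continuousOn
        · intro t _
          exact (((hg t).neg).sub ((hasDerivAt_id t).const_mul η)).differentiableAt.differentiableWithinAt
        · intro t ht
          rw [interior_Icc] at ht
          have hd : HasDerivAt (fun t => -(g t) - η * t) (-(φ t) - η * 1) t :=
            ((hg t).neg).sub ((hasDerivAt_id t).const_mul η)
          rw [hd.deriv]
          have := hneg t ⟨le_of_lt ht.1, le_of_lt ht.2⟩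
          linarith
      have := hmono ht0mem ht1mem (by linarith)
      have h1 := hgbd t₀ ht0mem
      have h2 := hgbd (t₀ + T) ht1mem
      rw [abs_le] at h1 h2
      simp only at this
      nlinarith [h1.2, h2.1]
  rw [le_div_iff₀ hη]
  linarith
end

section
/- Let E be a finite-dimensional real inner product space, f : ℝ → E → E continuous, x : ℝ → E with HasDerivAt x (f t (x t)) t for every t, and let W : ℝ × E → ℝ be continuously differentiable with auxiliary derivative Ẇ(t,y) defined as the Fréchet derivative of W at (t,y) applied to (1, f t y). Let K ⊆ E, h : ℝ × E → ℝ, ρ > 0, and Σρ(t) = {y : 0 ≤ h(t,y) ≤ ρ}. Suppose there exist M > 0 and η > 0 with |W(t,y)| ≤ M for all t ≥ 0, y ∈ K, and |Ẇ(t,y)| ≥ η for all t ≥ 0, y ∈ K ∩ Σρ(t). Then there is no t₀ ≥ 0 such that x(t) ∈ K ∩ Σρ(t) for all t ≥ t₀; i.e., the trajectory cannot remain in the boundary layer for all future times. -/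
/-- Auxiliary: a function with derivative everywhere at least `η > 0` on `[t₀, ∞)`
cannot be bounded in absolute value by `M` on `[t₀, ∞)`. -/
lemma aux_unbounded (φ g : ℝ → ℝ) (hd : ∀ t : ℝ, HasDerivAt φ (g t) t)
    (t₀ M η : ℝ) (hη : 0 < η)
    (hg : ∀ t : ℝ, t₀ ≤ t → η ≤ g t)
    (hbd : ∀ t : ℝ, t₀ ≤ t → |φ t| ≤ M) : False := by
  set ψ : ℝ → ℝ := fun t => φ t - η * t with hψ
  have hdψ : ∀ t : ℝ, HasDerivAt ψ (g t - η) t := by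
    intro t
    have := (hd t).sub ((hasDerivAt_id t).const_mul η)
    simp only [mul_one] at this
    exact this
  have hmono : MonotoneOn ψ (Set.Ici t₀) := by
    apply monotoneOn_of_deriv_nonneg (convex_Ici t₀)
    · exact fun t _ => ((hdψ t).continuousAt).continuousWithinAt
    · exact fun t _ => ((hdψ t).differentiableAt).differentiableWithinAt
    · intro t ht
      rw [(hdψ t).deriv]
      have ht' : t₀ ≤ t := le_of_lt (by simpa using ht)
      linarith [hg t ht']
  set T : ℝ := t₀ + (2 * M + 1) / η with hT
  have hTt₀ : t₀ ≤ T := by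
    have : 0 < (2 * M + 1) / η := by
      apply div_pos _ hη
      nlinarith [abs_nonneg (φ t₀), hbd t₀ le_rfl]
    rw [hT]; linarith
  have hle : ψ t₀ ≤ ψ T := hmono (Set.self_mem_Ici) hTt₀ hTt₀
  have h1 : φ t₀ + η * (T - t₀) ≤ φ T := by
    simp only [hψ] at hle; linarith
  have h2 : η * (T - t₀) = 2 * M + 1 := by
    rw [hT]
    field_simp
    ring
  have hb0 : |φ t₀| ≤ M := hbd t₀ le_rfl
  have hbT : |φ T| ≤ M := hbd T hTt₀
  have := abs_le.mp hb0
  have := abs_le.mp hbT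
  linarith

/-- Exclusion of persistent boundary residence (conclusion of Theorem 2): under the
boundedness and non-vanishing derivative conditions on the auxiliary function `W`,
no trajectory of `ẋ = f(t,x)` can remain in the boundary layer `K ∩ Σ_ρ(t)` for all
future times. -/
theorem no_persistent_boundary_residence
    {E : Type*} [NormedAddCommGroup E] [InnerProductSpace ℝ E] [FiniteDimensional ℝ E]
    (f : ℝ → E → E) (hf : Continuous fun p : ℝ × E => f p.1 p.2)
    (x : ℝ → E) (hx : ∀ t : ℝ, HasDerivAt x (f t (x t)) t)
    (h W : ℝ × E → ℝ) (hW : ContDiff ℝ 1 W)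
    (K : Set E) (ρ : ℝ) (hρ : 0 < ρ)
    (M η : ℝ) (hM : 0 < M) (hη : 0 < η)
    (hWbd : ∀ t : ℝ, 0 ≤ t → ∀ y ∈ K, |W (t, y)| ≤ M)
    (hWder : ∀ t : ℝ, 0 ≤ t → ∀ y ∈ K,
      0 ≤ h (t, y) → h (t, y) ≤ ρ → η ≤ |fderiv ℝ W (t, y) (1, f t y)|) :
    ¬ ∃ t₀ : ℝ, 0 ≤ t₀ ∧ ∀ t : ℝ, t₀ ≤ t →
      x t ∈ K ∧ 0 ≤ h (t, x t) ∧ h (t, x t) ≤ ρ := by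
  rintro ⟨t₀, ht₀, hres⟩
  -- continuity of the trajectory
  have hxc : Continuous x := by
    rw [continuous_iff_continuousAt]
    exact fun t => (hx t).continuousAt
  -- the curve t ↦ (t, x t) and its derivative
  have hcurve : ∀ t : ℝ, HasDerivAt (fun s : ℝ => (s, x s)) (1, f t (x t)) t :=
    fun t => (hasDerivAt_id t).prodMk (hx t)
  set g : ℝ → ℝ := fun t => fderiv ℝ W (t, x t) (1, f t (x t)) with hg
  set φ : ℝ → ℝ := fun t => W (t, x t) with hφ
  have hd : ∀ t : ℝ, HasDerivAt φ (g t) t := by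
    intro t
    exact ((hW.differentiable one_ne_zero (t, x t)).hasFDerivAt).comp_hasDerivAt t (hcurve t)
  -- g is continuous
  have hgc : Continuous g := by
    have h1 : Continuous fun t : ℝ => fderiv ℝ W (t, x t) :=
      (hW.continuous_fderiv one_ne_zero).comp (continuous_id.prodMk hxc)
    have h2 : Continuous fun t : ℝ => ((1 : ℝ), f t (x t)) :=
      continuous_const.prodMk (hf.comp (continuous_id.prodMk hxc))
    exact h1.clm_apply h2
  -- lower bound on |g| on [t₀, ∞)
  have habs : ∀ t : ℝ, t₀ ≤ t → η ≤ |g t| := by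
    intro t ht
    obtain ⟨hK, h0, hρ'⟩ := hres t ht
    exact hWder t (le_trans ht₀ ht) (x t) hK h0 hρ'
  -- |W| bound along the trajectory
  have hbd : ∀ t : ℝ, t₀ ≤ t → |φ t| ≤ M := by
    intro t ht
    exact hWbd t (le_trans ht₀ ht) (x t) (hres t ht).1
  -- no zero of g on [t₀, ∞)
  have hnz : ∀ t : ℝ, t₀ ≤ t → g t ≠ 0 := by
    intro t ht h0
    have := habs t ht
    rw [h0, abs_zero] at this
    linarith
  by_cases hpos : η ≤ g t₀
  · -- g ≥ η on [t₀, ∞) by IVT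
    have hgall : ∀ t : ℝ, t₀ ≤ t → η ≤ g t := by
      intro t ht
      rcases (le_abs.mp (habs t ht)) with h1 | h1
      · exact h1
      · exfalso
        have hmem : (0 : ℝ) ∈ Set.Icc (g t) (g t₀) := ⟨by linarith, by linarith⟩
        have := intermediate_value_Icc' ht hgc.continuousOn hmem
        obtain ⟨c, hc, hc0⟩ := this
        exact hnz c hc.1 hc0
    exact aux_unbounded φ g hd t₀ M η hη hgall hbd
  · -- g ≤ -η on [t₀, ∞); apply the lemma to -φ
    have hneg : g t₀ ≤ -η := by
      rcases (le_abs.mp (habs t₀ le_rfl)) with h1 | h1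
      · exact absurd h1 hpos
      · linarith
    have hgall : ∀ t : ℝ, t₀ ≤ t → η ≤ -g t := by
      intro t ht
      rcases (le_abs.mp (habs t ht)) with h1 | h1
      · exfalso
        have hmem : (0 : ℝ) ∈ Set.Icc (g t₀) (g t) := ⟨by linarith, by linarith⟩
        have := intermediate_value_Icc ht hgc.continuousOn hmem
        obtain ⟨c, hc, hc0⟩ := this
        exact hnz c hc.1 hc0
      · linarith
    have hd' : ∀ t : ℝ, HasDerivAt (fun s => -φ s) (-g t) t := fun t => (hd t).neg
    have hbd' : ∀ t : ℝ, t₀ ≤ t → |(fun s => -φ s) t| ≤ M := by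
      intro t ht; simpa [abs_neg] using hbd t ht
    exact aux_unbounded (fun s => -φ s) (fun s => -g s) hd' t₀ M η hη hgall hbd'
end
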